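/- The total number of row additions in the stack-based algorithm equals C(k,g) + C(k-1,g-1) + ... + C(k-g+2, 2), i.e., the sum over strictly increasing g-tuples in {0,...,k-1} of the number r(c) of maximal consecutive entries at the end of c equals ∑_{i=0}^{g-2} C(k-i, g-i). -/

import Mathlib

/-!
Swapping the two sums, the left side counts the pairs `(c, i)` with `1 ≤ i ≤ g - 1` such that
the last `i` entries of `c` are consecutive. Collapsing that run onto its first entry is a
bijection onto the strictly increasing `(g - i + 1)`-tuples with entries in `{0, …, k - i}`, of
which there are `C(k - i + 1, g - i + 1)`.
-/

open Finset

theorem Finset.sum_card_filter_comm {α β : Type*} (s : Finset α) (t : Finset β)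
    (r : α → β → Prop) [∀ a b, Decidable (r a b)] :
    ∑ a ∈ s, #{b ∈ t | r a b} = ∑ b ∈ t, #{a ∈ s | r a b} := by
  simp only [card_filter]
  exact sum_comm

theorem Fin.card_filter_strictMono (n N : ℕ) :
    #{c : Fin n → Fin N | StrictMono c} = N.choose n := by
  let e : {c : Fin n → Fin N // StrictMono c} ≃ (Fin n ↪o Fin N) :=
    { toFun c := OrderEmbedding.ofStrictMono c.1 c.2
      invFun f := ⟨f, f.strictMono⟩
      left_inv _ := rfl
      right_inv _ := rfl }
  rw [← Fintype.card_subtype, ← Nat.card_eq_fintype_card,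
    Nat.card_congr (e.trans Set.powersetCard.ofFinEmbEquiv), Set.powersetCard.card, Nat.card_fin]

section ConsecutiveFrom

variable {g k : ℕ}

-- `c t = c p + (t - p)` for all `t ≥ p`, written without truncated subtraction.
def ConsecutiveFrom (p : ℕ) (c : Fin g → Fin k) : Prop :=
  ∀ s t : Fin g, p ≤ s → p ≤ t → (c s : ℕ) + t = c t + s

instance (p : ℕ) : DecidablePred (ConsecutiveFrom (g := g) (k := k) p) := fun _ => by
  unfold ConsecutiveFrom; infer_instance

theorem ConsecutiveFrom.val_add_lt {p : ℕ} {c : Fin g → Fin k} (hc : ConsecutiveFrom p c)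
    (hmono : StrictMono c) (hp : p < g) (t : Fin g) (ht : (t : ℕ) ≤ p) :
    (c t : ℕ) + (g - 1 - p) < k := by
  have hle : c t ≤ c ⟨p, hp⟩ := hmono.monotone ht
  have hrun := hc ⟨p, hp⟩ ⟨g - 1, by omega⟩ le_rfl (by simp only; omega)
  have hlast := (c ⟨g - 1, by omega⟩).isLt
  simp only [Fin.le_def] at hle
  simp only at hrun
  omega

theorem consecutiveFrom_sub_iff {c : Fin g → Fin k} {i : ℕ} (hg : 0 < g) (hi : i ≤ g) :
    ConsecutiveFrom (g - i) c ↔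
      ∀ j < i, (c ⟨g - 1 - j, by omega⟩ : ℕ) + j = c ⟨g - 1, by omega⟩ := by
  constructor
  · intro hc j hj
    have := hc ⟨g - 1 - j, by omega⟩ ⟨g - 1, by omega⟩ (by simp only; omega)
      (by simp only; omega)
    simp only at this
    omega
  · intro hc s t hs ht
    have hs' := hc (g - 1 - s) (by omega)
    have ht' := hc (g - 1 - t) (by omega)
    simp only [show g - 1 - (g - 1 - (s : ℕ)) = s by omega,
      show g - 1 - (g - 1 - (t : ℕ)) = t by omega, Fin.eta] at hs' ht'
    omega

def extendConsecutive {p : ℕ} (hp : p < g) (d : Fin (p + 1) → Fin (k + p + 1 - g)) :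
    Fin g → Fin k :=
  fun t => ⟨d ⟨min t p, by omega⟩ + (t - p), by
    have := (d ⟨min t p, by omega⟩).isLt
    omega⟩

theorem strictMono_extendConsecutive {p : ℕ} (hp : p < g)
    {d : Fin (p + 1) → Fin (k + p + 1 - g)} (hd : StrictMono d) :
    StrictMono (extendConsecutive hp d) := by
  intro a b hab
  have hle : d ⟨min a p, by omega⟩ ≤ d ⟨min b p, by omega⟩ :=
    hd.monotone (Fin.mk_le_mk.2 (by omega))
  rw [Fin.lt_def] at hab
  rw [Fin.le_def] at hle
  rw [Fin.lt_def, extendConsecutive, extendConsecutive]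
  by_cases hap : (a : ℕ) < p
  · have hlt : d ⟨min a p, by omega⟩ < d ⟨min b p, by omega⟩ :=
      hd (Fin.mk_lt_mk.2 (by omega))
    rw [Fin.lt_def] at hlt
    simp only
    omega
  · simp only
    omega

theorem consecutiveFrom_extendConsecutive {p : ℕ} (hp : p < g)
    (d : Fin (p + 1) → Fin (k + p + 1 - g)) :
    ConsecutiveFrom p (extendConsecutive hp d) := by
  intro s t hs ht
  have hst : (⟨min s p, by omega⟩ : Fin (p + 1)) = ⟨min t p, by omega⟩ := by
    ext; simp only; omega
  simp only [extendConsecutive, hst]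
  omega

theorem card_strictMono_consecutiveFrom {p : ℕ} (hp : p < g) :
    #{c : Fin g → Fin k | StrictMono c ∧ ConsecutiveFrom p c} =
      (k + p + 1 - g).choose (p + 1) := by
  rw [← Fin.card_filter_strictMono]
  refine card_bij'
    (fun c hc t => ⟨c (Fin.castLE hp t), by
      obtain ⟨hmono, hrun⟩ := (mem_filter.1 hc).2
      have := hrun.val_add_lt hmono hp (Fin.castLE hp t) (by simpa using Nat.lt_succ_iff.1 t.2)
      omega⟩)
    (fun d _ => extendConsecutive hp d) ?_ ?_ ?_ ?_
  · intro c hc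
    simp only [mem_filter, mem_univ, true_and] at hc ⊢
    exact fun a b hab => hc.1 (Fin.strictMono_castLE hp hab)
  · intro d hd
    simp only [mem_filter, mem_univ, true_and] at hd ⊢
    exact ⟨strictMono_extendConsecutive hp hd, consecutiveFrom_extendConsecutive hp d⟩
  · intro c hc
    obtain ⟨-, hrun⟩ := (mem_filter.1 hc).2
    funext t
    ext
    simp only [extendConsecutive, Fin.castLE_mk]
    rcases le_total (t : ℕ) p with htp | hpt
    · simp only [min_eq_left htp, Nat.sub_eq_zero_of_le htp, add_zero]
    · have := hrun ⟨p, hp⟩ t le_rfl hpt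
      simp only at this
      simp only [min_eq_right hpt]
      omega
  · intro d _
    funext t
    ext
    have htp : (t : ℕ) ≤ p := Nat.lt_succ_iff.1 t.2
    simp only [extendConsecutive, Fin.val_castLE, min_eq_left htp, Nat.sub_eq_zero_of_le htp,
      add_zero]

end ConsecutiveFrom

theorem stmt_10 (k g : ℕ) (hg : 2 ≤ g) :
    ∑ c ∈ Finset.univ.filter (fun c : Fin g → Fin k => ∀ a b : Fin g, a < b → c a < c b),
        ((Finset.Icc 1 (g - 1)).filter (fun i =>
          ∀ j < i, (c ⟨g - 1 - j, by omega⟩ : ℕ) + j = (c ⟨g - 1, by omega⟩ : ℕ))).card =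
      ∑ i ∈ Finset.range (g - 1), Nat.choose (k - i) (g - i) := by
  rw [sum_card_filter_comm]
  have hcount : ∀ i ∈ Icc 1 (g - 1),
      #{c ∈ {c : Fin g → Fin k | ∀ a b : Fin g, a < b → c a < c b} |
        ∀ j < i, (c ⟨g - 1 - j, by omega⟩ : ℕ) + j = c ⟨g - 1, by omega⟩} =
        (k - (i - 1)).choose (g - (i - 1)) := by
    intro i hi
    rw [mem_Icc] at hi
    have hiff : ∀ c : Fin g → Fin k, ((∀ a b : Fin g, a < b → c a < c b) ∧
        ∀ j < i, (c ⟨g - 1 - j, by omega⟩ : ℕ) + j = c ⟨g - 1, by omega⟩) ↔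
        StrictMono c ∧ ConsecutiveFrom (g - i) c := fun c =>
      and_congr Iff.rfl (consecutiveFrom_sub_iff (by omega) (by omega)).symm
    rw [filter_filter, filter_congr fun c _ => hiff c, card_strictMono_consecutiveFrom (by omega)]
    congr 1 <;> omega
  rw [sum_congr rfl hcount]
  refine sum_nbij' (· - 1) (· + 1) ?_ ?_ ?_ ?_ (fun _ _ => rfl) <;>
    intro i hi <;> simp only [mem_Icc, mem_range] at hi ⊢ <;> omega
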